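/- arXiv:1903.01398 — 5 statements merged into one kernel-verified Lean document; each statement's English description precedes it below -/
import Mathlib

section
/- For every integer n ≥ 1, ∑_{k=1}^{n} k·C(n,k) = C_{n+1} − C_n. -/
/-- Ballot number `C(n,k) = (k/n) * binomial(2n-k-1, n-1)`. -/
def ballot (n k : ℕ) : ℕ := k * Nat.choose (2 * n - k - 1) (n - 1) / n

lemma ballot_key (n k : ℕ) (h1 : 1 ≤ k) (h2 : k ≤ n) :
    n * ((2 * n - k - 1).choose n) = (n - k) * ((2 * n - k - 1).choose (n - 1)) := by
  have h := Nat.choose_succ_right_eq (2 * n - k - 1) (n - 1)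
  have e1 : n - 1 + 1 = n := by omega
  have e2 : 2 * n - k - 1 - (n - 1) = n - k := by omega
  rw [e1, e2] at h
  rw [mul_comm n, mul_comm (n - k)]
  exact h

lemma ballot_le (n k : ℕ) (h1 : 1 ≤ k) (h2 : k ≤ n) :
    (2 * n - k - 1).choose n ≤ (2 * n - k - 1).choose (n - 1) :=
  Nat.le_of_mul_le_mul_left
    (by rw [ballot_key n k h1 h2]; exact Nat.mul_le_mul_right _ (Nat.sub_le n k))
    (by omega)

lemma ballot_eq (n k : ℕ) (h1 : 1 ≤ k) (h2 : k ≤ n) :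
    ballot n k = (2 * n - k - 1).choose (n - 1) - (2 * n - k - 1).choose n := by
  have hk := ballot_key n k h1 h2
  have hmul : n * ((2 * n - k - 1).choose (n - 1) - (2 * n - k - 1).choose n)
      = k * (2 * n - k - 1).choose (n - 1) := by
    rw [Nat.mul_sub, hk, ← Nat.sub_mul]
    congr 1
    omega
  unfold ballot
  rw [← hmul, Nat.mul_div_cancel_left _ (by omega : 0 < n)]

lemma ballot_cast (n k : ℕ) (h1 : 1 ≤ k) (h2 : k ≤ n) :
    (ballot n k : ℤ) = ((2 * n - k - 1).choose (n - 1) : ℤ)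
      - ((2 * n - k - 1).choose n : ℤ) := by
  rw [ballot_eq n k h1 h2]
  exact_mod_cast Int.ofNat_sub (ballot_le n k h1 h2)

/-- Telescoping function for the sum. -/
def ballotF (n k : ℕ) : ℤ :=
  (k : ℤ) * ((2 * n - k).choose n : ℤ) + (1 - (k : ℤ)) * ((2 * n - k).choose (n + 1) : ℤ)
    - ((2 * n - k).choose (n + 2) : ℤ)

lemma ballot_step (n k : ℕ) (h1 : 1 ≤ k) (h2 : k ≤ n) :
    (k : ℤ) * (((2 * n - k - 1).choose (n - 1) : ℤ) - ((2 * n - k - 1).choose n : ℤ))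
      = ballotF n k - ballotF n (k + 1) := by
  obtain ⟨m, hm⟩ : ∃ m, 2 * n - k - 1 = m := ⟨_, rfl⟩
  have e1 : 2 * n - k = m + 1 := by omega
  have e2 : 2 * n - (k + 1) = m := by omega
  obtain ⟨p, hp⟩ : ∃ p, n = p + 1 := ⟨n - 1, by omega⟩
  unfold ballotF
  rw [hm, e1, e2, hp]
  simp only [Nat.add_sub_cancel]
  rw [show p + 1 + 1 = p + 2 from rfl, show p + 1 + 2 = p + 3 from rfl,
    Nat.choose_succ_succ m p, Nat.choose_succ_succ m (p + 1), Nat.choose_succ_succ m (p + 2)]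
  push_cast
  ring

lemma ballotF_top (n : ℕ) (hn : 1 ≤ n) : ballotF n (n + 1) = 0 := by
  unfold ballotF
  rw [show 2 * n - (n + 1) = n - 1 from by omega,
    Nat.choose_eq_zero_of_lt (by omega), Nat.choose_eq_zero_of_lt (by omega),
    Nat.choose_eq_zero_of_lt (by omega)]
  push_cast
  ring

lemma catalan_final (m : ℕ) :
    (((2 * m + 3).choose (m + 2) : ℤ)) - ((2 * m + 3).choose (m + 4) : ℤ)
      = (catalan (m + 3) : ℤ) - (catalan (m + 2) : ℤ) := by
  -- the six basic identities, in ℕ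
  have hA : (2 * m + 4).choose (m + 2) = 2 * ((2 * m + 3).choose (m + 2)) := by
    have hsymm := Nat.choose_symm (show m + 2 ≤ 2 * m + 3 by omega)
    rw [show 2 * m + 3 - (m + 2) = m + 1 from by omega] at hsymm
    have hp : (2 * m + 4).choose (m + 2) = (2 * m + 3).choose (m + 1) + (2 * m + 3).choose (m + 2) :=
      Nat.choose_succ_succ (2 * m + 3) (m + 1)
    omega
  have hB : (2 * m + 3).choose (m + 3) * (m + 3) = (2 * m + 3).choose (m + 2) * (m + 1) := by
    have := Nat.choose_succ_right_eq (2 * m + 3) (m + 2)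
    rwa [show 2 * m + 3 - (m + 2) = m + 1 from by omega] at this
  have hC : (2 * m + 3).choose (m + 4) * (m + 4) = (2 * m + 3).choose (m + 3) * m := by
    have := Nat.choose_succ_right_eq (2 * m + 3) (m + 3)
    rwa [show 2 * m + 3 - (m + 3) = m from by omega] at this
  have hp : (m + 3) * catalan (m + 2) = (2 * m + 4).choose (m + 2) := by
    have := succ_mul_catalan_eq_centralBinom (m + 2)
    rwa [Nat.centralBinom, show 2 * (m + 2) = 2 * m + 4 from by ring] at this
  have hq : (m + 4) * catalan (m + 3) = (2 * m + 6).choose (m + 3) := by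
    have := succ_mul_catalan_eq_centralBinom (m + 3)
    rwa [Nat.centralBinom, show 2 * (m + 3) = 2 * m + 6 from by ring] at this
  have hY : (m + 3) * (2 * m + 6).choose (m + 3)
      = 2 * (2 * m + 5) * ((2 * m + 4).choose (m + 2)) := by
    have := Nat.succ_mul_centralBinom_succ (m + 2)
    rwa [Nat.centralBinom, Nat.centralBinom, show 2 * (m + 2 + 1) = 2 * m + 6 from by ring,
      show 2 * (m + 2) + 1 = 2 * m + 5 from by omega,
      show 2 * (m + 2) = 2 * m + 4 from by ring,
      show m + 2 + 1 = m + 3 from rfl] at this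
  -- cast to ℤ
  have hA' : ((2 * m + 4).choose (m + 2) : ℤ) = 2 * ((2 * m + 3).choose (m + 2) : ℤ) := by
    exact_mod_cast congrArg (Nat.cast : ℕ → ℤ) hA
  have hB' : ((2 * m + 3).choose (m + 3) : ℤ) * ((m : ℤ) + 3)
      = ((2 * m + 3).choose (m + 2) : ℤ) * ((m : ℤ) + 1) := by exact_mod_cast hB
  have hC' : ((2 * m + 3).choose (m + 4) : ℤ) * ((m : ℤ) + 4)
      = ((2 * m + 3).choose (m + 3) : ℤ) * (m : ℤ) := by exact_mod_cast hC
  have hp' : ((m : ℤ) + 3) * (catalan (m + 2) : ℤ) = ((2 * m + 4).choose (m + 2) : ℤ) := by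
    exact_mod_cast hp
  have hq' : ((m : ℤ) + 4) * (catalan (m + 3) : ℤ) = ((2 * m + 6).choose (m + 3) : ℤ) := by
    exact_mod_cast hq
  have hY' : ((m : ℤ) + 3) * ((2 * m + 6).choose (m + 3) : ℤ)
      = 2 * (2 * (m : ℤ) + 5) * ((2 * m + 4).choose (m + 2) : ℤ) := by exact_mod_cast hY
  set N : ℤ := (m : ℤ) with hN
  have hne : (N + 3) ^ 2 * (N + 4) ≠ 0 := by
    have : (0 : ℤ) ≤ N := by positivity
    positivity
  apply mul_left_cancel₀ hne
  linear_combination (-3 * (N + 2) * (N + 3)) * hA' + (-(N + 3) * N) * hB'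
    + (-(N + 3) ^ 2) * hC' + ((N + 3) * (N + 4)) * hp' + (-(N + 3) ^ 2) * hq'
    + (-(N + 3)) * hY'

/-- For every integer `n ≥ 1`, `∑_{k=1}^{n} k·C(n,k) = C_{n+1} - C_n`. -/
theorem sum_mul_ballot_eq (n : ℕ) (hn : 1 ≤ n) :
    (∑ k ∈ Finset.Icc 1 n, (k * ballot n k : ℤ)) =
      catalan (n + 1) - catalan n := by
  have hsum : (∑ k ∈ Finset.Icc 1 n, (k * ballot n k : ℤ))
      = ((2 * n - 1).choose n : ℤ) - ((2 * n - 1).choose (n + 2) : ℤ) := by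
    rw [← Finset.Ico_add_one_right_eq_Icc, Finset.sum_Ico_eq_sum_range]
    rw [show n + 1 - 1 = n from rfl]
    have := Finset.sum_range_sub' (fun i => ballotF n (1 + i)) n
    calc ∑ i ∈ Finset.range n, ((1 + i) * ballot n (1 + i) : ℤ)
        = ∑ i ∈ Finset.range n, (ballotF n (1 + i) - ballotF n (1 + i + 1)) := by
          apply Finset.sum_congr rfl
          intro i hi
          have hi' : i < n := Finset.mem_range.mp hi
          rw [ballot_cast n (1 + i) (by omega) (by omega)]
          have := ballot_step n (1 + i) (by omega) (by omega)
          rw [show 1 + i + 1 = (1 + i) + 1 from rfl]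
          rw [← this]
          push_cast
          ring
      _ = ballotF n (1 + 0) - ballotF n (1 + n) := this
      _ = ((2 * n - 1).choose n : ℤ) - ((2 * n - 1).choose (n + 2) : ℤ) := by
          rw [show 1 + n = n + 1 from by omega, ballotF_top n hn]
          unfold ballotF
          push_cast
          ring
  rw [hsum]
  rcases Nat.lt_or_ge n 2 with h2 | h2
  · have : n = 1 := by omega
    subst this
    norm_num [catalan_two, catalan_one]
    decide
  · obtain ⟨m, rfl⟩ : ∃ m, n = m + 2 := ⟨n - 2, by omega⟩
    rw [show 2 * (m + 2) - 1 = 2 * m + 3 from by omega, show m + 2 + 2 = m + 4 from rfl,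
      show m + 2 + 1 = m + 3 from rfl]
    exact catalan_final m
end

section
/- For all integers x > 0, y ≥ 0 and k ≥ 0, one has F(x, k·x + y) = k + F(x, y). -/
/-- The sequence `x₁ = x, x₂ = y`, and for `i ≥ 3`, `xᵢ` is the least nonnegative
residue of `-x_{i-2}` modulo `x_{i-1}` (with `xᵢ = 0` when `x_{i-1} = 0`);
the value at index `0` is junk. -/
def cpSeq (x y : ℕ) : ℕ → ℕ
  | 0 => 0
  | 1 => x
  | 2 => y
  | (i + 3) =>
      (cpSeq x y (i + 2) - cpSeq x y (i + 1) % cpSeq x y (i + 2)) % cpSeq x y (i + 2)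

/-- `Fcp x y` is the largest index `i` with `xᵢ > 0`. -/
noncomputable def Fcp (x y : ℕ) : ℕ := sSup {i : ℕ | 0 < cpSeq x y i}

lemma cpSeq_succ (x y i : ℕ) :
    cpSeq x y (i + 3) =
      (cpSeq x y (i + 2) - cpSeq x y (i + 1) % cpSeq x y (i + 2)) % cpSeq x y (i + 2) := rfl

lemma cpSeq_zero_stable (x y i : ℕ) (h : cpSeq x y (i + 2) = 0) :
    ∀ t, cpSeq x y (i + 2 + t) = 0 := by
  intro t
  induction t with
  | zero => exact h
  | succ t ih =>
    have e1 : i + 2 + (t + 1) = (i + t) + 3 := by ring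
    have e2 : i + t + 2 = i + 2 + t := by ring
    rw [e1, cpSeq_succ, e2, ih]
    simp

lemma cpSeq_le (x y : ℕ) : ∀ i, cpSeq x y (i + 2) ≤ y - i := by
  intro i
  induction i with
  | zero => simp [cpSeq]
  | succ i ih =>
    rcases Nat.eq_zero_or_pos (cpSeq x y (i + 2)) with h | h
    · rw [show i + 1 + 2 = i + 3 from rfl, cpSeq_succ, h]
      simp
    · have hlt : cpSeq x y (i + 3) < cpSeq x y (i + 2) := by
        rw [cpSeq_succ]
        exact Nat.mod_lt _ h
      have hlt' : cpSeq x y (i + 1 + 2) < cpSeq x y (i + 2) := hlt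
      omega

lemma cpSeq_shift3 (x y : ℕ) (hx : 0 < x) : cpSeq x (x + y) 3 = y := by
  rcases y with _ | m
  · simp [cpSeq, Nat.mod_self]
  · have h1 : x % (x + (m + 1)) = x := Nat.mod_eq_of_lt (by omega)
    show (x + (m + 1) - x % (x + (m + 1))) % (x + (m + 1)) = m + 1
    rw [h1]
    simp [Nat.mod_eq_of_lt (show m + 1 < x + (m + 1) by omega)]

lemma cpSeq_shift4 (x y : ℕ) (hx : 0 < x) : cpSeq x (x + y) 4 = cpSeq x y 3 := by
  have h3 : cpSeq x (x + y) 3 = y := cpSeq_shift3 x y hx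
  show (cpSeq x (x + y) 3 - cpSeq x (x + y) 2 % cpSeq x (x + y) 3) % cpSeq x (x + y) 3
      = (cpSeq x y 2 - cpSeq x y 1 % cpSeq x y 2) % cpSeq x y 2
  rw [h3]
  show (y - (x + y) % y) % y = (y - x % y) % y
  rw [Nat.add_mod_right x y]

lemma cpSeq_shift (x y : ℕ) (hx : 0 < x) :
    ∀ i, cpSeq x (x + y) (i + 3) = cpSeq x y (i + 2) := by
  have key : ∀ i, cpSeq x (x + y) (i + 3) = cpSeq x y (i + 2) ∧
      cpSeq x (x + y) (i + 4) = cpSeq x y (i + 3) := by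
    intro i
    induction i with
    | zero => exact ⟨cpSeq_shift3 x y hx, cpSeq_shift4 x y hx⟩
    | succ i ih =>
      refine ⟨ih.2, ?_⟩
      have e1 : cpSeq x (x + y) ((i + 2) + 3) =
          (cpSeq x (x + y) (i + 4) - cpSeq x (x + y) (i + 3) % cpSeq x (x + y) (i + 4)) %
            cpSeq x (x + y) (i + 4) := rfl
      have e2 : cpSeq x y ((i + 1) + 3) =
          (cpSeq x y (i + 3) - cpSeq x y (i + 2) % cpSeq x y (i + 3)) % cpSeq x y (i + 3) := rfl
      show cpSeq x (x + y) ((i + 2) + 3) = cpSeq x y ((i + 1) + 3)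
      rw [e1, e2, ih.1, ih.2]
  exact fun i => (key i).1

lemma cpSeq_bdd (x y : ℕ) : BddAbove {i : ℕ | 0 < cpSeq x y i} := by
  refine ⟨y + 1, fun i hi => ?_⟩
  by_contra hlt
  push_neg at hlt
  obtain ⟨t, rfl⟩ : ∃ t, i = y + 2 + t := ⟨i - (y + 2), by omega⟩
  have h0 : cpSeq x y (y + 2) = 0 := by
    have := cpSeq_le x y y
    omega
  have := cpSeq_zero_stable x y y h0 t
  simp only [Set.mem_setOf_eq, this] at hi
  exact absurd hi (lt_irrefl 0)

lemma Fcp_add_one (x y : ℕ) (hx : 0 < x) : Fcp x (x + y) = Fcp x y + 1 := by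
  set B := {i : ℕ | 0 < cpSeq x y i} with hB
  have h1B : (1 : ℕ) ∈ B := by simpa [hB, cpSeq] using hx
  have hne : B.Nonempty := ⟨1, h1B⟩
  have hbd : BddAbove B := cpSeq_bdd x y
  set n := sSup B with hn
  have hnB : n ∈ B := Nat.sSup_mem hne hbd
  have hn1 : 1 ≤ n := le_csSup hbd h1B
  have hzero : ∀ m, n < m → cpSeq x y m = 0 := by
    intro m hm
    by_contra h
    have hmB : m ∈ B := Nat.pos_of_ne_zero h
    exact absurd (le_csSup hbd hmB) (not_le.mpr hm)
  have hAmem : 0 < cpSeq x (x + y) (n + 1) := by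
    rcases Nat.lt_or_ge n 2 with h | h
    · have : n = 1 := by omega
      rw [this]
      show 0 < x + y
      omega
    · obtain ⟨t, ht⟩ : ∃ t, n = t + 2 := ⟨n - 2, by omega⟩
      rw [ht, show t + 2 + 1 = t + 3 from rfl, cpSeq_shift x y hx t]
      have := hnB
      rw [hB, Set.mem_setOf_eq, ht] at this
      exact this
  have hAub : ∀ m ∈ {i : ℕ | 0 < cpSeq x (x + y) i}, m ≤ n + 1 := by
    intro m hm
    by_contra h
    push_neg at h
    obtain ⟨t, ht⟩ : ∃ t, m = t + 3 := ⟨m - 3, by omega⟩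
    subst ht
    rw [Set.mem_setOf_eq, cpSeq_shift x y hx t] at hm
    have : cpSeq x y (t + 2) = 0 := hzero _ (by omega)
    omega
  have hA : Fcp x (x + y) = n + 1 := by
    unfold Fcp
    apply le_antisymm
    · exact csSup_le ⟨n + 1, hAmem⟩ hAub
    · exact le_csSup (cpSeq_bdd x (x + y)) hAmem
  rw [hA]
  rfl

/-- For all integers `x > 0`, `y ≥ 0` and `k ≥ 0`, `F(x, k·x + y) = k + F(x, y)`. -/
theorem Fcp_add_mul_right (x y k : ℕ) (hx : 0 < x) :
    Fcp x (k * x + y) = k + Fcp x y := by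
  induction k with
  | zero => simp
  | succ k ih =>
    have h : (k + 1) * x + y = x + (k * x + y) := by ring
    rw [h, Fcp_add_one x (k * x + y) hx, ih]
    omega
end

section
/- Let a₁ and b₁ be relatively prime positive integers. Then there is at most one choice of integers m, n ≥ 1 and at most one smooth arithmetical structure on CP_{m,n} whose labels at the two vertices of the doubled edge are a₁ and b₁; moreover, any such smooth structure has m = F(2b₁, a₁) − 1 and n = F(2a₁, b₁) − 1. -/
/-- An arithmetical structure on the graph `CP_{m,n}` (two paths `a₁,…,a_m` and
`b₁,…,b_n` joined by a doubled edge between `a₁` and `b₁`), encoded by 1-indexed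
label functions `a b : ℕ → ℕ` which are set to `0` outside the index ranges
`[1,m]` and `[1,n]`.  All labels are positive, their overall gcd is `1`,
`a₁ ∣ a₂ + 2b₁` (where `a₂ = 0` if `m = 1`), `aᵢ ∣ a_{i-1} + a_{i+1}` for
`1 < i < m`, `a_m ∣ a_{m-1}` if `m ≥ 2`, and symmetrically for the `bᵢ`. -/
def IsArithCP (m n : ℕ) (a b : ℕ → ℕ) : Prop :=
  (∀ i, 1 ≤ i → i ≤ m → 0 < a i) ∧
  (∀ i, 1 ≤ i → i ≤ n → 0 < b i) ∧
  (∀ i, ¬(1 ≤ i ∧ i ≤ m) → a i = 0) ∧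
  (∀ i, ¬(1 ≤ i ∧ i ≤ n) → b i = 0) ∧
  Nat.gcd ((Finset.Icc 1 m).gcd a) ((Finset.Icc 1 n).gcd b) = 1 ∧
  (a 1 ∣ a 2 + 2 * b 1) ∧
  (∀ i, 1 < i → i < m → a i ∣ a (i - 1) + a (i + 1)) ∧
  (2 ≤ m → a m ∣ a (m - 1)) ∧
  (b 1 ∣ b 2 + 2 * a 1) ∧
  (∀ i, 1 < i → i < n → b i ∣ b (i - 1) + b (i + 1)) ∧
  (2 ≤ n → b n ∣ b (n - 1))

/-- A smooth arithmetical structure on `CP_{m,n}`: an arithmetical structure with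
`a₁ > a₂ > … > a_m` and `b₁ > b₂ > … > b_n`. -/
def IsSmoothCP (m n : ℕ) (a b : ℕ → ℕ) : Prop :=
  IsArithCP m n a b ∧
  (∀ i, 1 ≤ i → i < m → a (i + 1) < a i) ∧
  (∀ i, 1 ≤ i → i < n → b (i + 1) < b i)

private lemma key_mod (d c r : ℕ) (hd : 0 < d) (hr : r < d) (hdvd : d ∣ r + c) :
    (d - c % d) % d = r := by
  have hcd : c % d < d := Nat.mod_lt _ hd
  have h1 : d ∣ r + c % d := by
    have he : r + c % d = (r + c) - d * (c / d) := by
      have := Nat.div_add_mod c d; omega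
    rw [he]; exact Nat.dvd_sub hdvd ⟨c / d, rfl⟩
  rcases Nat.eq_zero_or_pos (c % d) with h0 | h0
  · have hr0 : r = 0 := Nat.eq_zero_of_dvd_of_lt (by simpa [h0] using h1) hr
    simp [h0, hr0]
  · obtain ⟨k, hk⟩ := h1
    have hk2 : d * k < d * 2 := by rw [← hk]; omega
    have hk3 : k < 2 := Nat.lt_of_mul_lt_mul_left hk2
    have hk0 : k ≠ 0 := by rintro rfl; simp at hk; omega
    have hk1 : k = 1 := by omega
    subst hk1
    rw [Nat.mod_eq_of_lt (by omega : d - c % d < d)]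
    omega

private lemma cp_swap {m n : ℕ} {a b : ℕ → ℕ} (h : IsSmoothCP m n a b) :
    IsSmoothCP n m b a := by
  obtain ⟨⟨h1, h2, h3, h4, h5, h6, h7, h8, h9, h10, h11⟩, hs1, hs2⟩ := h
  exact ⟨⟨h2, h1, h4, h3, by rw [Nat.gcd_comm]; exact h5, h9, h10, h11, h6, h7, h8⟩, hs2, hs1⟩

private lemma seq_eq {m n : ℕ} {a b : ℕ → ℕ} (hm : 1 ≤ m) (h : IsSmoothCP m n a b) :
    ∀ j, cpSeq (2 * b 1) (a 1) (j + 2) = a (j + 1) := by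
  obtain ⟨⟨hpos, _, hzero, _, _, hdvd1, hdvdi, hdvdm, _, _, _⟩, hsm, _⟩ := h
  have ha1 : 0 < a 1 := hpos 1 le_rfl hm
  have base1 : cpSeq (2 * b 1) (a 1) 3 = a 2 := by
    have hr : a 2 < a 1 := by
      rcases Nat.lt_or_ge m 2 with hm2 | hm2
      · have : a 2 = 0 := hzero 2 (by omega)
        omega
      · exact hsm 1 le_rfl (by omega)
    show (a 1 - (2 * b 1) % a 1) % a 1 = a 2
    exact key_mod _ _ _ ha1 hr hdvd1
  have step : ∀ k, cpSeq (2 * b 1) (a 1) (k + 2) = a (k + 1) →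
      cpSeq (2 * b 1) (a 1) (k + 3) = a (k + 2) →
      cpSeq (2 * b 1) (a 1) (k + 4) = a (k + 3) := by
    intro k ih1 ih2
    have hun : cpSeq (2 * b 1) (a 1) (k + 4) =
        (a (k + 2) - a (k + 1) % a (k + 2)) % a (k + 2) := by
      show (cpSeq (2 * b 1) (a 1) (k + 3) - cpSeq (2 * b 1) (a 1) (k + 2) %
        cpSeq (2 * b 1) (a 1) (k + 3)) % cpSeq (2 * b 1) (a 1) (k + 3) = _
      rw [ih1, ih2]
    rw [hun]
    rcases Nat.lt_or_ge (k + 2) m with hlt | hge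
    · have hd : 0 < a (k + 2) := hpos _ (by omega) (by omega)
      have hr : a (k + 3) < a (k + 2) := hsm (k + 2) (by omega) hlt
      have hdd : a (k + 2) ∣ a (k + 3) + a (k + 1) := by
        have h := hdvdi (k + 2) (by omega) hlt
        have hi : k + 2 - 1 = k + 1 := rfl
        rw [hi] at h
        rw [Nat.add_comm (a (k + 3)) (a (k + 1))]
        exact h
      exact key_mod _ _ _ hd hr hdd
    · rcases Nat.eq_or_lt_of_le hge with heq | hgt
      · have hd : 0 < a (k + 2) := hpos _ (by omega) (by omega)
        have hz : a (k + 3) = 0 := hzero _ (by omega)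
        have hdd : a (k + 2) ∣ 0 + a (k + 1) := by
          have h := hdvdm (by omega)
          subst heq
          simpa using h
        rw [hz]
        exact key_mod _ _ _ hd hd hdd
      · have hz2 : a (k + 2) = 0 := hzero _ (by omega)
        have hz3 : a (k + 3) = 0 := hzero _ (by omega)
        simp [hz2, hz3]
  have pair : ∀ j, cpSeq (2 * b 1) (a 1) (j + 2) = a (j + 1) ∧
      cpSeq (2 * b 1) (a 1) (j + 3) = a (j + 2) := by
    intro j
    induction j with
    | zero => exact ⟨rfl, base1⟩
    | succ k ih => exact ⟨ih.2, step k ih.1 ih.2⟩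
  exact fun j => (pair j).1

private lemma Fcp_eq {m n : ℕ} {a b : ℕ → ℕ} (hm : 1 ≤ m) (hn : 1 ≤ n)
    (h : IsSmoothCP m n a b) : Fcp (2 * b 1) (a 1) = m + 1 := by
  have hseq := seq_eq hm h
  obtain ⟨⟨hpos, hposb, hzero, _, _, _, _, _, _, _, _⟩, _, _⟩ := h
  have hb1 : 0 < b 1 := hposb 1 le_rfl hn
  have hS : {i : ℕ | 0 < cpSeq (2 * b 1) (a 1) i} = Set.Icc 1 (m + 1) := by
    ext i
    match i with
    | 0 => simp [cpSeq]
    | 1 =>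
        simp only [Set.mem_setOf_eq, Set.mem_Icc, cpSeq]
        omega
    | j + 2 =>
        rw [Set.mem_setOf_eq, hseq j]
        simp only [Set.mem_Icc]
        constructor
        · intro hp
          refine ⟨by omega, ?_⟩
          by_contra hc
          have : a (j + 1) = 0 := hzero _ (by omega)
          omega
        · intro ⟨_, h2⟩
          exact hpos _ (by omega) (by omega)
  rw [Fcp, hS, csSup_Icc (by omega)]

/-- Let `a₁` and `b₁` be relatively prime positive integers.  Then there is at
most one choice of `m, n ≥ 1` and at most one smooth arithmetical structure on
`CP_{m,n}` whose labels at the two vertices of the doubled edge are `a₁` and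
`b₁`; moreover, any such smooth structure has `m = F(2b₁, a₁) - 1` and
`n = F(2a₁, b₁) - 1`. -/
theorem smooth_unique_of_coprime (a₁ b₁ : ℕ) (ha : 0 < a₁) (hb : 0 < b₁)
    (hcop : Nat.gcd a₁ b₁ = 1) :
    (∀ m n a b m' n' a' b', 1 ≤ m → 1 ≤ n → 1 ≤ m' → 1 ≤ n' →
      IsSmoothCP m n a b → IsSmoothCP m' n' a' b' →
      a 1 = a₁ → b 1 = b₁ → a' 1 = a₁ → b' 1 = b₁ →
      m = m' ∧ n = n' ∧ a = a' ∧ b = b') ∧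
    (∀ m n a b, 1 ≤ m → 1 ≤ n → IsSmoothCP m n a b → a 1 = a₁ → b 1 = b₁ →
      m = Fcp (2 * b₁) a₁ - 1 ∧ n = Fcp (2 * a₁) b₁ - 1) := by
  have uniq : ∀ m n a b, 1 ≤ m → 1 ≤ n → IsSmoothCP m n a b → a 1 = a₁ → b 1 = b₁ →
      m + 1 = Fcp (2 * b₁) a₁ ∧ n + 1 = Fcp (2 * a₁) b₁ := by
    intro m n a b hm hn h ha1 hb1
    have h1 := Fcp_eq hm hn h
    have h2 := Fcp_eq hn hm (cp_swap h)
    rw [ha1, hb1] at h1 h2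
    exact ⟨h1.symm, h2.symm⟩
  constructor
  · intro m n a b m' n' a' b' hm hn hm' hn' h h' ha1 hb1 ha1' hb1'
    obtain ⟨e1, e2⟩ := uniq m n a b hm hn h ha1 hb1
    obtain ⟨e1', e2'⟩ := uniq m' n' a' b' hm' hn' h' ha1' hb1'
    have hmm : m = m' := by omega
    have hnn : n = n' := by omega
    have hsa := seq_eq hm h
    have hsa' := seq_eq hm' h'
    have hsb := seq_eq hn (cp_swap h)
    have hsb' := seq_eq hn' (cp_swap h')
    rw [ha1, hb1] at hsa hsb
    rw [ha1', hb1'] at hsa' hsb'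
    refine ⟨hmm, hnn, funext fun i => ?_, funext fun i => ?_⟩
    · match i with
      | 0 =>
          rw [h.1.2.2.1 0 (by omega), h'.1.2.2.1 0 (by omega)]
      | j + 1 => rw [← hsa j, hsa' j]
    · match i with
      | 0 =>
          rw [h.1.2.2.2.1 0 (by omega), h'.1.2.2.2.1 0 (by omega)]
      | j + 1 => rw [← hsb j, hsb' j]
  · intro m n a b hm hn h ha1 hb1
    obtain ⟨e1, e2⟩ := uniq m n a b hm hn h ha1 hb1
    omega
end

section
/- If (a₁,…,a_m,b₁,…,b_n) is an arithmetical structure on CP_{m,n}, then a_m ∈ {1, 2}. -/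
/-- If `(a₁,…,a_m,b₁,…,b_n)` is an arithmetical structure on `CP_{m,n}`,
then `a_m ∈ {1, 2}`. -/
theorem arith_last_eq_one_or_two (m n : ℕ) (hm : 1 ≤ m) (hn : 1 ≤ n)
    (a b : ℕ → ℕ) (h : IsArithCP m n a b) :
    a m = 1 ∨ a m = 2 := by
  obtain ⟨hpa, hpb, hza, hzb, hgcd, ha1, hamid, halast, hb1, hbmid, hblast⟩ := h
  set d := a m with hd
  -- d divides a (m - j) and a (m - j + 1) for all j
  have key : ∀ j, d ∣ a (m - j) ∧ d ∣ a (m - j + 1) := by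
    intro j
    induction j with
    | zero =>
      refine ⟨dvd_refl _, ?_⟩
      have e : m - 0 + 1 = m + 1 := by omega
      rw [e, hza (m + 1) (by omega)]; exact dvd_zero _
    | succ j ih =>
      obtain ⟨ih1, ih2⟩ := ih
      have e1 : m - j = m - (j + 1) + 1 ∨ m - j = 0 := by omega
      rcases e1 with e1 | e1
      · refine ⟨?_, by rwa [← e1]⟩
        by_cases hi : 1 ≤ m - (j + 1)
        · -- interior or last relation
          by_cases hj : j = 0
          · subst hj
            have hm2 : 2 ≤ m := by omega
            have := halast hm2
            have e2 : m - 1 = m - (0 + 1) := by omega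
            rwa [e2] at this
          · have h1 : 1 < m - j := by omega
            have h2 : m - j < m := by omega
            have := hamid (m - j) h1 h2
            have e2 : m - j - 1 = m - (j + 1) := by omega
            rw [e2] at this
            have hd1 : d ∣ a (m - (j + 1)) + a (m - j + 1) := dvd_trans ih1 this
            have hd2 : d ∣ a (m - j + 1) := ih2
            have := Nat.dvd_sub hd1 hd2
            simpa using this
        · rw [hza (m - (j + 1)) (by omega)]; exact dvd_zero _
      · have e2 : m - (j + 1) = 0 := by omega
        rw [e2]
        rw [e1] at ih1 ih2
        exact ⟨ih1, ih2⟩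
  have hall_a : ∀ i, d ∣ a i := by
    intro i
    by_cases hi : 1 ≤ i ∧ i ≤ m
    · have e : i = m - (m - i) := by omega
      rw [e]; exact (key (m - i)).1
    · rw [hza i hi]; exact dvd_zero _
  -- d divides 2 * b j and 2 * b (j+1)
  have keyb : ∀ j, d ∣ 2 * b j ∧ d ∣ 2 * b (j + 1) := by
    intro j
    induction j with
    | zero =>
      constructor
      · rw [hzb 0 (by omega)]; exact dvd_zero _
      · -- d ∣ 2 * b 1 from a 1 ∣ a 2 + 2 * b 1
        have h1 : d ∣ a 2 + 2 * b 1 := dvd_trans (hall_a 1) ha1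
        have := Nat.dvd_sub h1 (hall_a 2)
        simpa using this
    | succ j ih =>
      obtain ⟨ih1, ih2⟩ := ih
      refine ⟨ih2, ?_⟩
      by_cases hjn : j + 2 ≤ n
      · by_cases hj : j = 0
        · subst hj
          -- use b 1 ∣ b 2 + 2 * a 1
          have h1 : 2 * b 1 ∣ 2 * (b 2 + 2 * a 1) := mul_dvd_mul_left 2 hb1
          have h2 : d ∣ 2 * b 2 + 4 * a 1 := by
            refine dvd_trans ih2 ?_
            have : 2 * (b 2 + 2 * a 1) = 2 * b 2 + 4 * a 1 := by ring
            rwa [this] at h1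
          have h3 : d ∣ 4 * a 1 := Dvd.dvd.mul_left (hall_a 1) 4
          have h5 := Nat.dvd_sub h2 h3
          simpa using h5
        · have h1 : 1 < j + 1 := by omega
          have h2 : j + 1 < n := by omega
          have := hbmid (j + 1) h1 h2
          have e2 : j + 1 - 1 = j := by omega
          rw [e2] at this
          have h4 : 2 * b (j + 1) ∣ 2 * (b j + b (j + 1 + 1)) := mul_dvd_mul_left 2 this
          have h5 : d ∣ 2 * b j + 2 * b (j + 2) := by
            refine dvd_trans ih2 ?_
            have : 2 * (b j + b (j + 1 + 1)) = 2 * b j + 2 * b (j + 2) := by ring_nf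
            rwa [this] at h4
          have h6 := Nat.dvd_sub h5 ih1
          rw [Nat.add_sub_cancel_left] at h6
          exact h6
      · rw [hzb (j + 2) (by omega)]; exact dvd_zero _
  have hall_b : ∀ i, d ∣ 2 * b i := fun i => (keyb i).1
  -- d divides 2 * gcd
  have hga : d ∣ (Finset.Icc 1 m).gcd a := Finset.dvd_gcd fun i _ => hall_a i
  have hgb : d ∣ (Finset.Icc 1 n).gcd (fun i => 2 * b i) :=
    Finset.dvd_gcd fun i _ => hall_b i
  have e : (Finset.Icc 1 n).gcd (fun i => 2 * b i) = 2 * (Finset.Icc 1 n).gcd b := by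
    simpa using (Finset.gcd_mul_left (a := 2) (f := b) (s := Finset.Icc 1 n))
  rw [e] at hgb
  have hga2 : d ∣ 2 * (Finset.Icc 1 m).gcd a := Dvd.dvd.mul_left hga 2
  have hfin : d ∣ 2 := by
    have := Nat.dvd_gcd hga2 hgb
    rwa [Nat.gcd_mul_left, hgcd, mul_one] at this
  have hdpos : 0 < d := hpa m hm le_rfl
  exact Nat.prime_two.eq_one_or_self_of_dvd d hfin
end

section
/- For every integer n ≥ 3, there are exactly four smooth arithmetical structures on CP_{1,n}; for n = 1 and n = 2, there are exactly three smooth arithmetical structures on CP_{1,n}. -/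
/-- The number of arithmetical structures on `CP_{m,n}`. -/
noncomputable def arithCountCP (m n : ℕ) : ℕ :=
  Set.ncard {p : (ℕ → ℕ) × (ℕ → ℕ) | IsArithCP m n p.1 p.2}

/-- The number of smooth arithmetical structures on `CP_{m,n}`. -/
noncomputable def smoothCountCP (m n : ℕ) : ℕ :=
  Set.ncard {p : (ℕ → ℕ) × (ℕ → ℕ) | IsSmoothCP m n p.1 p.2}


/-! ### Auxiliary definitions and lemmas -/

def aF (c : ℕ) : ℕ → ℕ := fun i => if i = 1 then c else 0

def bF (n c d : ℕ) : ℕ → ℕ := fun i => if 1 ≤ i ∧ i ≤ n then c * (n - i) + d else 0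

def bF4 (n : ℕ) : ℕ → ℕ := fun i =>
  if 1 ≤ i ∧ i ≤ n then (if i = n then 1 else if i + 1 = n then 2 else 4 * (n - i) - 5) else 0

lemma bF_val (n c d i : ℕ) (h1 : 1 ≤ i) (h2 : i ≤ n) : bF n c d i = c * (n - i) + d := by
  simp [bF, h1, h2]

lemma bF_zero (n c d i : ℕ) (h : ¬(1 ≤ i ∧ i ≤ n)) : bF n c d i = 0 := if_neg h

lemma bF4_zero (n i : ℕ) (h : ¬(1 ≤ i ∧ i ≤ n)) : bF4 n i = 0 := if_neg h

lemma aF_val (c : ℕ) : aF c 1 = c := if_pos rfl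

lemma aF_ne : aF 1 ≠ aF 2 := by
  intro h
  have := congrFun h 1
  simp [aF] at this

lemma smooth_gen (n aa c d : ℕ) (hn : 1 ≤ n) (h2a : 2 * aa = c) (hdc : d ∣ c)
    (h2d : aa ∣ 2 * d) (hgc : aa = 1 ∨ d = 1) (haa : 1 ≤ aa) (hd : 1 ≤ d) :
    IsSmoothCP 1 n (aF aa) (bF n c d) := by
  have hc : 2 ≤ c := by omega
  refine ⟨⟨?_, ?_, ?_, ?_, ?_, ?_, ?_, ?_, ?_, ?_, ?_⟩, ?_, ?_⟩
  · intro i h1 h2; have : i = 1 := by omega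
    simp [aF, this]; omega
  · intro i h1 h2; simp [bF, h1, h2]; omega
  · intro i hi; simp [aF]; omega
  · intro i hi; simp only [bF, if_neg hi]
  · -- gcd
    have h1 : (Finset.Icc 1 1).gcd (aF aa) = aa := by simp [aF]
    rcases hgc with h | h
    · subst h; rw [h1]; exact Nat.gcd_one_left _
    · have h2 : (Finset.Icc 1 n).gcd (bF n c d) ∣ 1 := by
        have := Finset.gcd_dvd (f := bF n c d) (show n ∈ Finset.Icc 1 n by simp [hn])
        simpa [bF, hn, h] using this
      simp [h1, Nat.dvd_one.mp h2]
  · -- a1 ∣ a2 + 2 b1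
    have ha2 : aF aa 2 = 0 := by simp [aF]
    have hb1 : bF n c d 1 = c * (n - 1) + d := by simp [bF, hn]
    rw [ha2, hb1]; simp only [aF, if_pos rfl, Nat.zero_add]
    have e1 : aa ∣ 2 * (c * (n-1)) := ⟨(n-1) * 4, by rw [← h2a]; ring⟩
    have : 2 * (c * (n - 1) + d) = 2 * (c * (n-1)) + 2 * d := by ring
    rw [this]
    exact Nat.dvd_add e1 h2d
  · intro i h1 h2; omega
  · intro h; omega
  · -- b1 ∣ b2 + 2 a1
    have hb1 : bF n c d 1 = c * (n - 1) + d := by simp [bF, hn]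
    have ha1 : aF aa 1 = aa := by simp [aF]
    rw [hb1, ha1]
    rcases Nat.lt_or_ge n 2 with h | h
    · have hn1 : n = 1 := by omega
      have hb2 : bF n c d 2 = 0 := by simp [bF]; omega
      rw [hb2, hn1]
      simp only [Nat.sub_self, Nat.mul_zero, Nat.zero_add]
      exact (h2a ▸ hdc : d ∣ 2 * aa)
    · have hb2 : bF n c d 2 = c * (n - 2) + d := by
        have h2 : (1:ℕ) ≤ 2 := by norm_num
        simp [bF, h2, h]
      rw [hb2]
      refine ⟨1, ?_⟩
      have hk : n - 1 = (n-2)+1 := by omega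
      rw [hk, ← h2a]; ring
  · intro i h1 h2
    have e1 : bF n c d i = c * (n - i) + d := by simp [bF]; omega
    have e2 : bF n c d (i-1) = c * (n - (i-1)) + d := by simp [bF]; omega
    have e3 : bF n c d (i+1) = c * (n - (i+1)) + d := by simp [bF]; omega
    rw [e1, e2, e3]
    obtain ⟨k, hk1, hk2, hk3⟩ : ∃ k, n - (i-1) = k+2 ∧ n - i = k+1 ∧ n - (i+1) = k :=
      ⟨n - i - 1, by omega, by omega, by omega⟩
    rw [hk1, hk2, hk3]
    exact ⟨2, by ring⟩
  · intro h
    have e1 : bF n c d n = d := by simp [bF]; omega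
    have e2 : bF n c d (n-1) = c * 1 + d := by
      have h1 : 1 ≤ n - 1 := by omega
      have h2 : n - 1 ≤ n := by omega
      have h3 : n - (n - 1) = 1 := by omega
      simp [bF, h1, h2, h3]
    rw [e1, e2]
    exact Nat.dvd_add (by simpa using hdc) dvd_rfl
  · intro i h1 h2; omega
  · intro i h1 h2
    have e1 : bF n c d i = c * (n - i) + d := by simp [bF]; omega
    have e3 : bF n c d (i+1) = c * (n - (i+1)) + d := by simp [bF]; omega
    rw [e1, e3]
    obtain ⟨k, hk2, hk3⟩ : ∃ k, n - i = k+1 ∧ n - (i+1) = k := ⟨n - i - 1, by omega, by omega⟩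
    rw [hk2, hk3, Nat.mul_succ]
    omega

lemma bF4_val (n i : ℕ) (hn : 3 ≤ n) (h1 : 1 ≤ i) (h2 : i ≤ n) :
    (i = n ∧ bF4 n i = 1) ∨ (i + 1 = n ∧ bF4 n i = 2) ∨
    (i + 2 ≤ n ∧ bF4 n i = 4 * (n - i) - 5 ∧ 3 ≤ bF4 n i ∧ bF4 n i + 5 = 4 * (n - i)) := by
  rcases Nat.lt_or_ge (i+2) (n+1) with h | h
  · right; right
    have hne1 : ¬ i = n := by omega
    have hne2 : ¬ i + 1 = n := by omega
    have hv : bF4 n i = 4 * (n - i) - 5 := by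
      simp only [bF4, if_pos (And.intro h1 h2), if_neg hne1, if_neg hne2]
    exact ⟨by omega, hv, by omega, by omega⟩
  · rcases Nat.eq_or_lt_of_le h2 with he | hlt
    · left; subst he; constructor; rfl
      simp [bF4, h1]
    · right; left
      have he : i + 1 = n := by omega
      have hne1 : ¬ i = n := by omega
      have : bF4 n i = 2 := by
        simp only [bF4, if_pos (And.intro h1 h2), if_neg hne1, if_pos he]
      exact ⟨he, this⟩

lemma smooth4 (n : ℕ) (hn : 3 ≤ n) : IsSmoothCP 1 n (aF 2) (bF4 n) := by
  have hbv := bF4_val n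
  refine ⟨⟨?_, ?_, ?_, ?_, ?_, ?_, ?_, ?_, ?_, ?_, ?_⟩, ?_, ?_⟩
  · intro i j1 j2; have : i = 1 := by omega
    simp [aF, this]
  · intro i j1 j2
    rcases hbv i hn j1 j2 with ⟨_, h⟩ | ⟨_, h⟩ | ⟨_, _, h, _⟩ <;> omega
  · intro i hi; simp [aF]; omega
  · intro i hi; simp only [bF4, if_neg hi]
  · have h1 : (Finset.Icc 1 1).gcd (aF 2) = 2 := by simp [aF]
    have h2 : (Finset.Icc 1 n).gcd (bF4 n) ∣ 1 := by
      have := Finset.gcd_dvd (f := bF4 n) (show n ∈ Finset.Icc 1 n by simp; omega)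
      have hv : bF4 n n = 1 := by simp [bF4]; omega
      rwa [hv] at this
    simp [h1, Nat.dvd_one.mp h2]
  · have : aF 2 2 = 0 := by simp [aF]
    rw [this]
    have : aF 2 1 = 2 := by simp [aF]
    rw [this]
    exact ⟨bF4 n 1, by ring⟩
  · intro i h1 h2; omega
  · intro h; omega
  · -- b1 ∣ b2 + 2*2
    have ha1 : aF 2 1 = 2 := by simp [aF]
    rw [ha1]
    rcases hbv 1 hn (le_refl 1) (by omega) with ⟨h, _⟩ | ⟨h, hv⟩ | ⟨h, _, _, hv⟩
    · omega
    · -- n = 2 impossible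
      omega
    · rcases hbv 2 hn (by omega) (by omega) with ⟨h2, _⟩ | ⟨h2, hv2⟩ | ⟨h2, _, _, hv2⟩
      · omega
      · -- n = 3 : b1 = 3, b2 = 2, 3 ∣ 6
        have : bF4 n 1 = 3 := by omega
        rw [this, hv2]; norm_num
      · -- n ≥ 4 : b2 + 4 = b1
        have : bF4 n 2 + 2 * 2 = bF4 n 1 := by omega
        rw [this]
  · intro i h1 h2
    rcases hbv i hn (by omega) (by omega) with ⟨h, _⟩ | ⟨h, hv⟩ | ⟨h, _, _, hv⟩
    · omega
    · -- i = n-1 : b i = 2, b(i-1) = 3 or (n=3: 3), b(i+1) = 1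
      have hip : bF4 n (i+1) = 1 := by
        rcases hbv (i+1) hn (by omega) (by omega) with ⟨_, hh⟩ | ⟨hh, _⟩ | ⟨hh, _⟩ <;> omega
      have him : bF4 n (i-1) = 3 := by
        rcases hbv (i-1) hn (by omega) (by omega) with ⟨hh, _⟩ | ⟨hh, _⟩ | ⟨hh, _, _, hh2⟩ <;> omega
      rw [hip, him, hv]; norm_num
    · -- i ≤ n-2
      rcases hbv (i+1) hn (by omega) (by omega) with ⟨hh, _⟩ | ⟨hh, hvp⟩ | ⟨hh, _, _, hvp⟩
      · omega
      · -- i + 1 = n - 1, so i = n-2, b i = 3, b(i-1)+b(i+1) = ? 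
        have hbi : bF4 n i = 3 := by omega
        have him : bF4 n (i-1) = 7 := by
          rcases hbv (i-1) hn (by omega) (by omega) with ⟨hh2, _⟩ | ⟨hh2, _⟩ | ⟨hh2, _, _, hh3⟩ <;> omega
        rw [hbi, him, hvp]; norm_num
      · -- i+1 ≤ n-2 : all formula
        have him : bF4 n (i-1) + 5 = 4 * (n - (i-1)) := by
          rcases hbv (i-1) hn (by omega) (by omega) with ⟨hh2, _⟩ | ⟨hh2, _⟩ | ⟨hh2, _, _, hh3⟩ <;> omega
        refine ⟨2, by omega⟩
  · intro h
    have : bF4 n n = 1 := by simp [bF4]; omega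
    rw [this]; exact one_dvd _
  · intro i h1 h2; omega
  · intro i h1 h2
    rcases hbv i hn (by omega) (by omega) with ⟨h, _⟩ | ⟨h, hv⟩ | ⟨h, _, _, hv⟩
    · omega
    · have : bF4 n (i+1) = 1 := by
        rcases hbv (i+1) hn (by omega) (by omega) with ⟨_, hh⟩ | ⟨hh, _⟩ | ⟨hh, _⟩ <;> omega
      omega
    · rcases hbv (i+1) hn (by omega) (by omega) with ⟨hh, hvp⟩ | ⟨hh, hvp⟩ | ⟨hh, _, _, hvp⟩ <;> omega

lemma classify (n : ℕ) (hn : 1 ≤ n) (a b : ℕ → ℕ) (h : IsSmoothCP 1 n a b) :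
    (a = aF 1 ∧ b = bF n 2 1) ∨ (a = aF 1 ∧ b = bF n 2 2) ∨ (a = aF 2 ∧ b = bF n 4 1) ∨
    (3 ≤ n ∧ a = aF 2 ∧ b = bF4 n) := by
  obtain ⟨⟨hpa, hpb, hza, hzb, hg, hda, -, -, hdb1, hintb, hbend⟩, -, hdec⟩ := h
  have ha1pos : 0 < a 1 := hpa 1 le_rfl le_rfl
  have ha2 : a 2 = 0 := hza 2 (by omega)
  have hda' : a 1 ∣ 2 * b 1 := by rwa [ha2, Nat.zero_add] at hda
  have hg' : Nat.gcd (a 1) ((Finset.Icc 1 n).gcd b) = 1 := by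
    have : (Finset.Icc 1 1).gcd a = a 1 := by simp
    rwa [this] at hg
  have hlt : ∀ i j, 1 ≤ i → i < j → j ≤ n → b j < b i := by
    intro i j h1 h2 h3
    induction j, h2 using Nat.le_induction with
    | base => exact hdec i h1 (by omega)
    | succ j hj IH =>
      have : b (j+1) < b j := hdec j (by omega) (by omega)
      exact this.trans (IH (by omega))
  have hs : ∀ j, 1 ≤ j → j ≤ n → b n ∣ b j := by
    have key : ∀ k, ∀ j, 1 ≤ j → j + k = n → b n ∣ b j := by
      intro k
      induction k using Nat.strong_induction_on with
      | _ k IH =>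
        intro j hj hjk
        match k, hjk with
        | 0, hjk => rw [show j = n by omega]
        | 1, hjk =>
          have := hbend (by omega)
          rwa [show n - 1 = j by omega] at this
        | (k+2), hjk =>
          have hd := hintb (j+1) (by omega) (by omega)
          rw [show j + 1 - 1 = j by omega] at hd
          have h1 : b n ∣ b (j+1) := IH (k+1) (by omega) (j+1) (by omega) (by omega)
          have h2 : b n ∣ b (j+1+1) := IH k (by omega) (j+2) (by omega) (by omega)
          have h3 : b n ∣ b j + b (j+1+1) := h1.trans hd
          have := Nat.dvd_sub h3 h2
          rwa [Nat.add_sub_cancel] at this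
    intro j h1 h2
    exact key (n - j) j h1 (by omega)
  have hbnpos : 0 < b n := hpb n hn le_rfl
  have hcop : Nat.Coprime (a 1) (b n) := by
    have hsG : b n ∣ (Finset.Icc 1 n).gcd b :=
      Finset.dvd_gcd (fun i hi => by
        simp only [Finset.mem_Icc] at hi; exact hs i hi.1 hi.2)
    exact Nat.Coprime.coprime_dvd_right hsG hg'
  have hadvd : ∀ j, 1 ≤ j → j ≤ n → a 1 ∣ 2 * b j := by
    intro j
    induction j using Nat.strong_induction_on with
    | _ j IH =>
      intro hj1 hj2
      rcases Nat.lt_or_ge j 2 with hj | hj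
      · rw [show j = 1 by omega]; exact hda'
      rcases Nat.lt_or_ge j 3 with hj3 | hj3
      · rw [show j = 2 by omega]
        obtain ⟨r, hr⟩ := hdb1
        have hdM : a 1 ∣ 2 * (b 1 * r) := by
          obtain ⟨t, ht⟩ := hda'
          exact ⟨t * r, by rw [show 2 * (b 1 * r) = (2 * b 1) * r by ring, ht]; ring⟩
        generalize hM : b 1 * r = M at hr hdM
        have he : 2 * b 2 = 2 * M - 4 * a 1 := by omega
        rw [he]
        exact Nat.dvd_sub hdM ⟨4, by ring⟩
      · have hd := hintb (j-1) (by omega) (by omega)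
        rw [show j - 1 - 1 = j - 2 by omega, show j - 1 + 1 = j by omega] at hd
        obtain ⟨r, hr⟩ := hd
        have h1 : a 1 ∣ 2 * b (j-1) := IH (j-1) (by omega) (by omega) (by omega)
        have h2 : a 1 ∣ 2 * b (j-2) := IH (j-2) (by omega) (by omega) (by omega)
        have hdM : a 1 ∣ 2 * (b (j-1) * r) := by
          obtain ⟨t, ht⟩ := h1
          exact ⟨t * r, by rw [show 2 * (b (j-1) * r) = (2 * b (j-1)) * r by ring, ht]; ring⟩
        generalize hM : b (j-1) * r = M at hr hdM
        have he : 2 * b j = 2 * M - 2 * b (j-2) := by omega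
        rw [he]
        exact Nat.dvd_sub hdM h2
  have ha12 : a 1 ∣ 2 := Nat.Coprime.dvd_of_dvd_mul_right hcop (hadvd n hn le_rfl)
  have hbn2 : b n ∣ 2 := by
    have h1 : b n ∣ b 2 := by
      rcases Nat.lt_or_ge n 2 with h | h
      · rw [hzb 2 (by omega)]; exact dvd_zero _
      · exact hs 2 (by omega) h
    have h2 : b n ∣ b 2 + 2 * a 1 := (hs 1 le_rfl hn).trans hdb1
    have h3 : b n ∣ 2 * a 1 := by
      have := Nat.dvd_sub h2 h1
      rwa [Nat.add_sub_cancel_left] at this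
    exact Nat.Coprime.dvd_of_dvd_mul_right (Nat.Coprime.symm hcop) h3
  -- top relation
  have ha1le : a 1 ≤ 2 := Nat.le_of_dvd (by norm_num) ha12
  have hcaseAB : 2 ≤ n → (b 2 + 2 * a 1 = b 1) ∨ (a 1 = 2 ∧ b 1 = 3 ∧ b 2 = 2) := by
    intro h2
    obtain ⟨r, hr⟩ := hdb1
    have hb2pos : 0 < b 2 := hpb 2 (by omega) h2
    have hb21 : b 2 < b 1 := hdec 1 le_rfl (by omega)
    rcases Nat.lt_or_ge r 2 with hr2 | hr2
    · left
      rcases Nat.lt_or_ge r 1 with h0 | h1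
      · rw [show r = 0 by omega, Nat.mul_zero] at hr; omega
      · rw [show r = 1 by omega, Nat.mul_one] at hr; omega
    · rcases Nat.lt_or_ge r 3 with hr3 | hr3
      · rw [show r = 2 by omega] at hr
        right; omega
      · exfalso
        have h3 : b 1 * 3 ≤ b 1 * r := Nat.mul_le_mul_left _ hr3
        rw [← hr] at h3; omega
  -- generic value extraction from a chain
  have hval : ∀ w, (∀ j, 1 ≤ j → j + 1 ≤ n → b j = b (j+1) + w) →
      ∀ i, 1 ≤ i → i ≤ n → b i = w * (n - i) + b n := by
    intro w hch
    have key : ∀ k, k + 1 ≤ n → b (n - k) = w * k + b n := by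
      intro k
      induction k with
      | zero => intro _; simp
      | succ k IH =>
        intro hk
        have h1 : b (n - (k+1)) = b (n - (k+1) + 1) + w := hch (n-(k+1)) (by omega) (by omega)
        rw [show n - (k+1) + 1 = n - k by omega] at h1
        rw [h1, IH (by omega)]; ring
    intro i h1 h2
    have := key (n - i) (by omega)
    rwa [show n - (n - i) = i by omega] at this
  -- chain for a 1 = 1
  have hchain2 : a 1 = 1 → ∀ j, 1 ≤ j → j + 1 ≤ n → b j = b (j+1) + 2 := by
    intro ha1 j
    induction j using Nat.strong_induction_on with
    | _ j IH =>
      intro hj1 hjn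
      rcases Nat.lt_or_ge j 2 with h2 | h2
      · rw [show j = 1 by omega, show (1:ℕ)+1 = 2 from rfl]
        rcases hcaseAB (by omega) with hcA | hcB
        · omega
        · omega
      · have hprev : b (j-1) = b j + 2 := by
          have := IH (j-1) (by omega) (by omega) (by omega)
          rwa [show j - 1 + 1 = j by omega] at this
        have hd := hintb j (by omega) (by omega)
        have hdd : b j ∣ b (j+1) + 2 := by
          have h1 := Nat.dvd_sub hd (dvd_refl (b j))
          rwa [show b (j-1) + b (j+1) - b j = b (j+1) + 2 by omega] at h1
        obtain ⟨t, ht⟩ := hdd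
        have hbj2 : 2 ≤ b j := by have := hlt j n hj1 (by omega) le_rfl; omega
        have hbj1p : 0 < b (j+1) := hpb (j+1) (by omega) (by omega)
        have hdecj : b (j+1) < b j := hdec j (by omega) (by omega)
        rcases Nat.lt_or_ge t 2 with ht2 | ht2
        · rcases Nat.lt_or_ge t 1 with ht0 | ht1
          · rw [show t = 0 by omega, Nat.mul_zero] at ht; omega
          · rw [show t = 1 by omega, Nat.mul_one] at ht; omega
        · exfalso
          have h3 : b j * 2 ≤ b j * t := Nat.mul_le_mul_left _ ht2
          rw [← ht] at h3; omega
  -- a as function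
  have haeq : ∀ c, a 1 = c → a = aF c := by
    intro c hc; funext i
    by_cases hi : i = 1
    · rw [hi, hc]; exact (aF_val c).symm
    · rw [hza i (by omega)]; simp [aF, hi]
  have hbeq : ∀ c d, (∀ i, 1 ≤ i → i ≤ n → b i = c * (n - i) + d) → b = bF n c d := by
    intro c d hv; funext i
    by_cases hi : 1 ≤ i ∧ i ≤ n
    · rw [bF_val n c d i hi.1 hi.2, hv i hi.1 hi.2]
    · rw [bF_zero n c d i hi, hzb i hi]
  rcases (Nat.dvd_prime Nat.prime_two).mp ha12 with ha1 | ha1 <;>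
    rcases (Nat.dvd_prime Nat.prime_two).mp hbn2 with hbn | hbn
  pick_goal 4
  · exfalso; rw [ha1, hbn] at hcop; exact absurd hcop (by norm_num [Nat.Coprime])
  -- a=1, bn=1 : S1
  · left
    refine ⟨haeq 1 ha1, hbeq 2 1 ?_⟩
    intro i h1 h2
    have := hval 2 (hchain2 ha1) i h1 h2
    omega
  -- a=1, bn=2 : S2
  · right; left
    refine ⟨haeq 1 ha1, hbeq 2 2 ?_⟩
    intro i h1 h2
    have := hval 2 (hchain2 ha1) i h1 h2
    omega
  -- a=2, bn=1 : S3 or S4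
  · rcases Nat.lt_or_ge n 2 with hn2 | hn2
    · -- n = 1 : b 1 = 1, S3
      right; right; left
      refine ⟨haeq 2 ha1, hbeq 4 1 ?_⟩
      intro i h1 h2
      have : i = 1 ∧ n = 1 := by omega
      rw [this.1]
      have : b 1 = 1 := by rw [show n = 1 by omega] at hbn; exact hbn
      omega
    rcases hcaseAB hn2 with hcA | hcB
    · -- case A : b 2 + 4 = b 1
      rw [ha1] at hcA
      -- main dichotomy
      have main : ∀ i, 1 ≤ i → i + 1 ≤ n →
          (∀ j, 1 ≤ j → j ≤ i → b j = b (j+1) + 4) ∨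
          (4 ≤ n ∧ (∀ j, 1 ≤ j → j + 3 ≤ n → b j = b (j+1) + 4) ∧ b (n-2) = 3 ∧ b (n-1) = 2) := by
        intro i
        induction i using Nat.strong_induction_on with
        | _ i IH =>
          intro hi1 hin
          rcases Nat.lt_or_ge i 2 with h2 | h2
          · left; intro j hj1 hj2
            rw [show j = 1 by omega, show (1:ℕ)+1 = 2 from rfl]; omega
          · rcases IH (i-1) (by omega) (by omega) (by omega) with HL | HR
            · have hprev : b (i-1) = b i + 4 := by
                have := HL (i-1) (by omega) (le_refl _)
                rwa [show i - 1 + 1 = i by omega] at this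
              have hd := hintb i (by omega) (by omega)
              have hdd : b i ∣ b (i+1) + 4 := by
                have h1 := Nat.dvd_sub hd (dvd_refl (b i))
                rwa [show b (i-1) + b (i+1) - b i = b (i+1) + 4 by omega] at h1
              obtain ⟨t, ht⟩ := hdd
              have hbj2 : 2 ≤ b i := by have := hlt i n hi1 (by omega) le_rfl; omega
              have hbip : 0 < b (i+1) := hpb (i+1) (by omega) (by omega)
              have hdeci : b (i+1) < b i := hdec i (by omega) (by omega)
              rcases Nat.lt_or_ge t 2 with ht2 | ht2
              · have ht1 : t = 1 := by
                  rcases Nat.lt_or_ge t 1 with h0 | h1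
                  · rw [show t = 0 by omega, Nat.mul_zero] at ht; omega
                  · omega
                rw [ht1, Nat.mul_one] at ht
                left; intro j hj1 hj2
                rcases Nat.lt_or_ge j i with hj | hj
                · exact HL j hj1 (by omega)
                · rw [show j = i by omega]; omega
              · have h3 : b i * 2 ≤ b i * t := Nat.mul_le_mul_left _ ht2
                rw [← ht] at h3
                have hbi3 : b i = 2 ∨ b i = 3 := by omega
                rcases hbi3 with hbi | hbi
                · exfalso; rw [hbi] at ht; omega
                · rw [hbi] at ht
                  have hbi1 : b (i+1) = 2 := by omega
                  have hne : i + 1 ≠ n := by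
                    intro hh; rw [hh] at hbi1; omega
                  have hi2n : i + 2 = n := by
                    by_contra hc
                    have h4 : i + 3 ≤ n := by omega
                    have hb2 : b (i+2) = 1 := by
                      have hlt2 : b (i+2) < b (i+1) := hdec (i+1) (by omega) (by omega)
                      have : 0 < b (i+2) := hpb (i+2) (by omega) (by omega)
                      omega
                    have hlt3 : b (i+3) < b (i+2) := hdec (i+2) (by omega) (by omega)
                    have : 0 < b (i+3) := hpb (i+3) (by omega) (by omega)
                    omega
                  right
                  refine ⟨by omega, ?_, ?_, ?_⟩
                  · intro j hj1 hj3; exact HL j hj1 (by omega)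
                  · rw [show n - 2 = i by omega]; exact hbi
                  · rw [show n - 1 = i + 1 by omega]; exact hbi1
            · right; exact HR
      rcases main (n-1) (by omega) (by omega) with HL | ⟨h4n, hch, hn2v, hn1v⟩
      · -- S3
        right; right; left
        refine ⟨haeq 2 ha1, hbeq 4 1 ?_⟩
        intro i h1 h2
        have hch' : ∀ j, 1 ≤ j → j + 1 ≤ n → b j = b (j+1) + 4 := by
          intro j hj1 hj2; exact HL j hj1 (by omega)
        have := hval 4 hch' i h1 h2
        omega
      · -- S4, n ≥ 4
        right; right; right
        refine ⟨by omega, haeq 2 ha1, ?_⟩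
        have key : ∀ k, k + 3 ≤ n → b (n - 2 - k) = 4 * k + 3 := by
          intro k
          induction k with
          | zero => intro _; simpa using hn2v
          | succ k IH =>
            intro hk
            have h1 : b (n-2-(k+1)) = b (n-2-(k+1) + 1) + 4 := hch (n-2-(k+1)) (by omega) (by omega)
            rw [show n - 2 - (k+1) + 1 = n - 2 - k by omega] at h1
            rw [h1, IH (by omega)]; ring
        funext i
        by_cases hi : 1 ≤ i ∧ i ≤ n
        · rcases Nat.lt_or_ge i (n-1) with hii | hii
          · -- i ≤ n - 2 : formula
            have hv := key (n - 2 - i) (by omega)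
            rw [show n - 2 - (n - 2 - i) = i by omega] at hv
            have hbf : bF4 n i = 4 * (n - i) - 5 := by
              have hne1 : ¬ i = n := by omega
              have hne2 : ¬ i + 1 = n := by omega
              simp only [bF4, if_pos hi, if_neg hne1, if_neg hne2]
            rw [hbf, hv]; omega
          · rcases Nat.lt_or_ge i n with hii2 | hii2
            · -- i = n - 1
              have hieq : i = n - 1 := by omega
              have hbf : bF4 n i = 2 := by
                have hne1 : ¬ i = n := by omega
                have he : i + 1 = n := by omega
                simp only [bF4, if_pos hi, if_neg hne1, if_pos he]
              rw [hbf, hieq]; exact hn1v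
            · -- i = n
              have hieq : i = n := by omega
              have hbf : bF4 n i = 1 := by simp only [bF4, if_pos hi, if_pos hieq]
              rw [hbf, hieq]; exact hbn
        · rw [bF4_zero n i hi, hzb i hi]
    · -- case B : a1 = 2, b1 = 3, b2 = 2 : n = 3, S4
      obtain ⟨-, hb1, hb2⟩ := hcB
      have hn3 : n = 3 := by
        rcases Nat.lt_or_ge n 3 with h3 | h3
        · -- n = 2 : b n = b 2 = 2 but b n = 1
          exfalso
          have : n = 2 := by omega
          rw [this] at hbn; omega
        · have hb3 : b 3 = 1 := by
            have h1 : b 3 < b 2 := hdec 2 (by omega) (by omega)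
            have h2 : 0 < b 3 := hpb 3 (by omega) (by omega)
            omega
          by_contra hc
          have h4 : 4 ≤ n := by omega
          have h5 : b 4 < b 3 := hdec 3 (by omega) (by omega)
          have h6 : 0 < b 4 := hpb 4 (by omega) (by omega)
          omega
      have hb3 : b 3 = 1 := by rw [← hn3]; rw [hn3] at hbn ⊢; exact hbn
      right; right; right
      refine ⟨by omega, haeq 2 ha1, ?_⟩
      funext i
      by_cases hi : 1 ≤ i ∧ i ≤ n
      · subst hn3
        have : i = 1 ∨ i = 2 ∨ i = 3 := by omega
        rcases this with hieq | hieq | hieq <;> subst hieq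
        · have : bF4 3 1 = 3 := by simp [bF4]
          rw [this, hb1]
        · have : bF4 3 2 = 2 := by simp [bF4]
          rw [this, hb2]
        · have : bF4 3 3 = 1 := by simp [bF4]
          rw [this, hb3]
      · rw [bF4_zero n i hi, hzb i hi]


lemma setEq_ge3 (n : ℕ) (hn3 : 3 ≤ n) :
    {p : (ℕ → ℕ) × (ℕ → ℕ) | IsSmoothCP 1 n p.1 p.2} =
      {(aF 1, bF n 2 1), (aF 1, bF n 2 2), (aF 2, bF n 4 1), (aF 2, bF4 n)} := by
  ext ⟨pa, pb⟩
  simp only [Set.mem_setOf_eq, Set.mem_insert_iff, Set.mem_singleton_iff, Prod.mk.injEq]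
  constructor
  · intro hp
    rcases classify n (by omega) pa pb hp with ⟨h1, h2⟩ | ⟨h1, h2⟩ | ⟨h1, h2⟩ | ⟨-, h1, h2⟩
    · exact Or.inl ⟨h1, h2⟩
    · exact Or.inr (Or.inl ⟨h1, h2⟩)
    · exact Or.inr (Or.inr (Or.inl ⟨h1, h2⟩))
    · exact Or.inr (Or.inr (Or.inr ⟨h1, h2⟩))
  · rintro (⟨h1, h2⟩ | ⟨h1, h2⟩ | ⟨h1, h2⟩ | ⟨h1, h2⟩) <;> subst h1 <;> subst h2
    · exact smooth_gen n 1 2 1 (by omega) (by norm_num) (by norm_num) (by norm_num)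
        (Or.inl rfl) le_rfl le_rfl
    · exact smooth_gen n 1 2 2 (by omega) (by norm_num) (by norm_num) (by norm_num)
        (Or.inl rfl) le_rfl (by norm_num)
    · exact smooth_gen n 2 4 1 (by omega) (by norm_num) (by norm_num) (by norm_num)
        (Or.inr rfl) (by norm_num) le_rfl
    · exact smooth4 n hn3
lemma setEq_le2 (n : ℕ) (hn : 1 ≤ n) (hn2 : n ≤ 2) :
    {p : (ℕ → ℕ) × (ℕ → ℕ) | IsSmoothCP 1 n p.1 p.2} =
      {(aF 1, bF n 2 1), (aF 1, bF n 2 2), (aF 2, bF n 4 1)} := by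
  ext ⟨pa, pb⟩
  simp only [Set.mem_setOf_eq, Set.mem_insert_iff, Set.mem_singleton_iff, Prod.mk.injEq]
  constructor
  · intro hp
    rcases classify n hn pa pb hp with ⟨h1, h2⟩ | ⟨h1, h2⟩ | ⟨h1, h2⟩ | ⟨h3, -, -⟩
    · exact Or.inl ⟨h1, h2⟩
    · exact Or.inr (Or.inl ⟨h1, h2⟩)
    · exact Or.inr (Or.inr ⟨h1, h2⟩)
    · omega
  · rintro (⟨h1, h2⟩ | ⟨h1, h2⟩ | ⟨h1, h2⟩) <;> subst h1 <;> subst h2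
    · exact smooth_gen n 1 2 1 hn (by norm_num) (by norm_num) (by norm_num)
        (Or.inl rfl) le_rfl le_rfl
    · exact smooth_gen n 1 2 2 hn (by norm_num) (by norm_num) (by norm_num)
        (Or.inl rfl) le_rfl (by norm_num)
    · exact smooth_gen n 2 4 1 hn (by norm_num) (by norm_num) (by norm_num)
        (Or.inr rfl) (by norm_num) le_rfl

/-- For every integer `n ≥ 3` there are exactly four smooth arithmetical
structures on `CP_{1,n}`; for `n = 1` and `n = 2` there are exactly three. -/
theorem smoothCount_one_n (n : ℕ) (hn : 1 ≤ n) :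
    (3 ≤ n → smoothCountCP 1 n = 4) ∧ (n ≤ 2 → smoothCountCP 1 n = 3) := by
  have ne12 : ((aF 1, bF n 2 1) : (ℕ → ℕ) × (ℕ → ℕ)) ≠ (aF 1, bF n 2 2) := by
    intro h
    have this : bF n 2 1 n = bF n 2 2 n := congrFun (congrArg Prod.snd h) n
    rw [bF_val n 2 1 n hn le_rfl, bF_val n 2 2 n hn le_rfl] at this
    omega
  have ne13 : ((aF 1, bF n 2 1) : (ℕ → ℕ) × (ℕ → ℕ)) ≠ (aF 2, bF n 4 1) := by
    intro h; exact aF_ne (congrArg Prod.fst h)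
  have ne14 : ((aF 1, bF n 2 1) : (ℕ → ℕ) × (ℕ → ℕ)) ≠ (aF 2, bF4 n) := by
    intro h; exact aF_ne (congrArg Prod.fst h)
  have ne23 : ((aF 1, bF n 2 2) : (ℕ → ℕ) × (ℕ → ℕ)) ≠ (aF 2, bF n 4 1) := by
    intro h; exact aF_ne (congrArg Prod.fst h)
  have ne24 : ((aF 1, bF n 2 2) : (ℕ → ℕ) × (ℕ → ℕ)) ≠ (aF 2, bF4 n) := by
    intro h; exact aF_ne (congrArg Prod.fst h)
  constructor
  · intro hn3
    have ne34 : ((aF 2, bF n 4 1) : (ℕ → ℕ) × (ℕ → ℕ)) ≠ (aF 2, bF4 n) := by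
      intro h
      have this : bF n 4 1 1 = bF4 n 1 := congrFun (congrArg Prod.snd h) 1
      rw [bF_val n 4 1 1 le_rfl (by omega)] at this
      have hb4 : bF4 n 1 = 4 * (n - 1) - 5 := by
        have hne1 : ¬ (1 : ℕ) = n := by omega
        have hne2 : ¬ (1 : ℕ) + 1 = n := by omega
        simp only [bF4, if_pos (And.intro le_rfl (by omega : 1 ≤ n)), if_neg hne1, if_neg hne2]
      rw [hb4] at this
      omega
    have hcount : smoothCountCP 1 n =
        ({(aF 1, bF n 2 1), (aF 1, bF n 2 2), (aF 2, bF n 4 1), (aF 2, bF4 n)} :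
          Set ((ℕ → ℕ) × (ℕ → ℕ))).ncard := by
      rw [smoothCountCP, setEq_ge3 n hn3]
    rw [hcount]
    rw [Set.ncard_insert_of_notMem (by
      simp only [Set.mem_insert_iff, Set.mem_singleton_iff]
      push_neg
      exact ⟨ne12, ne13, ne14⟩) (Set.toFinite _)]
    rw [Set.ncard_insert_of_notMem (by
      simp only [Set.mem_insert_iff, Set.mem_singleton_iff]
      push_neg
      exact ⟨ne23, ne24⟩) (Set.toFinite _)]
    rw [Set.ncard_pair ne34]
  · intro hn2
    have hcount : smoothCountCP 1 n =
        ({(aF 1, bF n 2 1), (aF 1, bF n 2 2), (aF 2, bF n 4 1)} :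
          Set ((ℕ → ℕ) × (ℕ → ℕ))).ncard := by
      rw [smoothCountCP, setEq_le2 n hn hn2]
    rw [hcount]
    rw [Set.ncard_insert_of_notMem (by
      simp only [Set.mem_insert_iff, Set.mem_singleton_iff]
      push_neg
      exact ⟨ne12, ne13⟩) (Set.toFinite _)]
    rw [Set.ncard_pair ne23]
end
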